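/- Let d ≥ 1, r > 0, k ∈ ℕ and ε > 0. Then there exists δ_1 > 0 such that the following holds for every δ ∈ (0,δ_1], every ℓ ≥ r, and every a > 0 with k ≤ a·δ^{d+1}. Let P ⊆ ℝ^d be locally finite and suppose that for every z ∈ ℤ^d with Q_{δ,z} ⊆ B_{ℓ+1}(0) one has | #(P ∩ Q_{δ,z})/(a·δ^d) − 1 | < δ. Then for every finite set S ⊆ P ∩ B_{ℓ−r}(0) with #S ≤ k, Σ_{x∈S} Σ_{z∈ℤ^d} | #((P ∩ Q_{δ,z} ∩ B̄_r(x)) \ S)/a − vol(Q_{δ,z} ∩ B̄_r(x)) | < ε, where vol denotes Lebesgue measure on ℝ^d. -/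

import Mathlib

open MeasureTheory Metric

/-- The cube `δ z + [-δ/2, δ/2)^d` of the grid `𝒞_δ`. -/
def gridCube (d : ℕ) (δ : ℝ) (z : Fin d → ℤ) : Set (EuclideanSpace ℝ (Fin d)) :=
  {y | ∀ i : Fin d, δ * (z i : ℝ) - δ / 2 ≤ y i ∧ y i < δ * (z i : ℝ) + δ / 2}

/-! A cube `Q` of side `δ` has diameter `δ√d`, so around a point `x` there are three cases.
If `Q` misses `B̄_r(x)` the term vanishes. If `Q ⊆ B̄_r(x)`, the regularity estimate together
with `#S ≤ aδ^(d+1)` bounds the term by `2δ · vol Q`. Otherwise `Q` lies in the shell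
`B̄_{r+δ√d}(x) \ B_{r-δ√d}(x)` and the term is at most `2 · vol Q`. The cubes being disjoint,
the sum over `z` is at most `2δ · vol B̄_r + 2 · vol(shell)`, which tends to `0` with `δ`
because the shells shrink to a sphere, a null set. -/

open Filter Function Topology
open scoped ENNReal

section Counting

lemma abs_sub_lt_of_abs_div_sub_one_lt {n c δ : ℝ} (hc : 0 < c) (h : |n / c - 1| < δ) :
    |n - c| < δ * c := by
  rwa [div_sub_one hc.ne', abs_div, abs_of_pos hc, div_lt_iff₀ hc] at h

variable {α : Type*} {A B : Set α} {S : Finset α} {a v δ : ℝ}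

lemma abs_ncard_sdiff_div_sub_le (hA : A.Finite) (ha : 0 < a) (hv : 0 < v)
    (hreg : |(A.ncard : ℝ) / (a * v) - 1| < δ) (hS : (S.card : ℝ) ≤ δ * (a * v)) :
    |((A \ S).ncard : ℝ) / a - v| ≤ 2 * δ * v := by
  have hA' := abs_lt.mp (abs_sub_lt_of_abs_div_sub_one_lt (mul_pos ha hv) hreg)
  have hupper : ((A \ S).ncard : ℝ) ≤ A.ncard := by
    exact_mod_cast Set.ncard_le_ncard Set.sdiff_subset hA
  have hlower : (A.ncard : ℝ) ≤ (A \ S).ncard + S.card := by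
    exact_mod_cast (Set.ncard_coe_finset S ▸ Set.ncard_le_ncard_sdiff_add_ncard A S)
  rw [div_sub' ha.ne', abs_div, abs_of_pos ha, div_le_iff₀ ha, abs_le]
  constructor <;> nlinarith

lemma ncard_div_le_two_mul (hA : A.Finite) (hBA : B ⊆ A) (ha : 0 < a) (hv : 0 < v) (hδ : δ ≤ 1)
    (hreg : |(A.ncard : ℝ) / (a * v) - 1| < δ) : (B.ncard : ℝ) / a ≤ 2 * v := by
  have hA' := abs_lt.mp (abs_sub_lt_of_abs_div_sub_one_lt (mul_pos ha hv) hreg)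
  have hBA' : (B.ncard : ℝ) ≤ A.ncard := by exact_mod_cast Set.ncard_le_ncard hBA hA
  rw [div_le_iff₀ ha]
  nlinarith [mul_le_mul_of_nonneg_right hδ (mul_pos ha hv).le]

end Counting

section GridCube

variable {d : ℕ} {δ : ℝ}

lemma gridCube_eq_preimage (z : Fin d → ℤ) :
    gridCube d δ z = (MeasurableEquiv.toLp 2 (Fin d → ℝ)).symm ⁻¹'
      Set.univ.pi (fun i => Set.Ico (δ * (z i : ℝ) - δ / 2) (δ * (z i : ℝ) + δ / 2)) := by
  ext y
  simp [gridCube, Set.mem_pi, MeasurableEquiv.coe_toLp_symm]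

lemma measurableSet_gridCube (z : Fin d → ℤ) :
    MeasurableSet (gridCube d δ z) := by
  rw [gridCube_eq_preimage]
  exact (MeasurableEquiv.toLp 2 (Fin d → ℝ)).symm.measurable
    (MeasurableSet.univ_pi fun _ => measurableSet_Ico)

lemma volume_gridCube (hδ : 0 ≤ δ) (z : Fin d → ℤ) :
    volume (gridCube d δ z) = ENNReal.ofReal (δ ^ d) := by
  rw [gridCube_eq_preimage,
    (EuclideanSpace.volume_preserving_symm_measurableEquiv_toLp (Fin d)).measure_preimage
      (MeasurableSet.univ_pi fun _ => measurableSet_Ico).nullMeasurableSet,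
    volume_pi_pi]
  simp [Real.volume_Ico, ENNReal.ofReal_pow hδ]

lemma toReal_volume_gridCube (hδ : 0 ≤ δ) (z : Fin d → ℤ) :
    (volume (gridCube d δ z)).toReal = δ ^ d := by
  rw [volume_gridCube hδ, ENNReal.toReal_ofReal (pow_nonneg hδ d)]

lemma eq_floor_of_mem_gridCube (hδ : 0 < δ) {z : Fin d → ℤ} {y : EuclideanSpace ℝ (Fin d)}
    (hy : y ∈ gridCube d δ z) (i : Fin d) : z i = ⌊y i / δ + 1 / 2⌋ := by
  obtain ⟨hlo, hhi⟩ := hy i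
  have hlo' : (z i : ℝ) - 1 / 2 ≤ y i / δ := by rw [le_div_iff₀ hδ]; linarith
  have hhi' : y i / δ < z i + 1 / 2 := by rw [div_lt_iff₀ hδ]; linarith
  rw [eq_comm, Int.floor_eq_iff]
  constructor <;> linarith

lemma pairwise_disjoint_gridCube (hδ : 0 < δ) : Pairwise (Disjoint on (gridCube d δ)) := by
  refine fun z z' hne => Set.disjoint_left.mpr fun y hy hy' => hne (funext fun i => ?_)
  rw [eq_floor_of_mem_gridCube hδ hy i, eq_floor_of_mem_gridCube hδ hy' i]

lemma dist_le_of_mem_gridCube (hδ : 0 ≤ δ) {z : Fin d → ℤ} {p q : EuclideanSpace ℝ (Fin d)}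
    (hp : p ∈ gridCube d δ z) (hq : q ∈ gridCube d δ z) : dist p q ≤ δ * √d := by
  have hcoord : ∀ i, dist (p i) (q i) ^ 2 ≤ δ ^ 2 := fun i => by
    rw [Real.dist_eq, sq_abs]
    nlinarith [hp i, hq i]
  calc dist p q = √(∑ i, dist (p i) (q i) ^ 2) := EuclideanSpace.dist_eq p q
    _ ≤ √(∑ _i : Fin d, δ ^ 2) := Real.sqrt_le_sqrt (Finset.sum_le_sum fun i _ => hcoord i)
    _ = δ * √d := by
      rw [Finset.sum_const, Finset.card_univ, Fintype.card_fin, nsmul_eq_mul, mul_comm,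
        Real.sqrt_mul (sq_nonneg δ), Real.sqrt_sq hδ]

lemma tsum_volume_gridCube_inter_le (hδ : 0 < δ) {T : Set (EuclideanSpace ℝ (Fin d))}
    (hT : MeasurableSet T) : ∑' z, volume (gridCube d δ z ∩ T) ≤ volume T :=
  (tsum_meas_le_meas_iUnion_of_disjoint volume (fun z => (measurableSet_gridCube z).inter hT)
    fun _ _ hne => ((pairwise_disjoint_gridCube hδ hne).mono Set.inter_subset_left
      Set.inter_subset_left)).trans
    (measure_mono (Set.iUnion_subset fun _ => Set.inter_subset_right))

end GridCube

section Shell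

lemma subset_closedBall_add_of_inter_nonempty {α : Type*} [PseudoMetricSpace α] {Q : Set α}
    {x : α} {r s : ℝ} (hQ : ∀ p ∈ Q, ∀ q ∈ Q, dist p q ≤ s) (hmeet : (Q ∩ closedBall x r).Nonempty) :
    Q ⊆ closedBall x (r + s) := by
  obtain ⟨q, hqQ, hqx⟩ := hmeet
  intro p hp
  rw [mem_closedBall] at hqx ⊢
  linarith [dist_triangle p q x, hQ p hp q hqQ]

lemma subset_closedBall_sdiff_ball_of_inter_nonempty {α : Type*} [PseudoMetricSpace α]
    {Q : Set α} {x : α} {r s : ℝ} (hQ : ∀ p ∈ Q, ∀ q ∈ Q, dist p q ≤ s)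
    (hmeet : (Q ∩ closedBall x r).Nonempty) (hout : ¬ Q ⊆ closedBall x r) :
    Q ⊆ closedBall x (r + s) \ ball x (r - s) := by
  obtain ⟨p, hpQ, hpx⟩ := Set.not_subset.mp hout
  refine fun q hq => ⟨subset_closedBall_add_of_inter_nonempty hQ hmeet hq, fun hqx => hpx ?_⟩
  exact mem_closedBall.mpr (by linarith [mem_ball.mp hqx, dist_triangle p q x, hQ p hpQ q hq])

lemma measure_closedBall_sdiff_ball_center {G : Type*} [SeminormedAddCommGroup G]
    [MeasurableSpace G] [MeasurableAdd G] (μ : Measure G) [μ.IsAddLeftInvariant] (x : G)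
    (R R' : ℝ) : μ (closedBall x R \ ball x R') = μ (closedBall 0 R \ ball 0 R') := by
  rw [← measure_preimage_add μ x, Set.preimage_sdiff, preimage_add_closedBall, preimage_add_ball,
    sub_self]

lemma tendsto_addHaar_closedBall_sdiff_ball {E : Type*} [NormedAddCommGroup E] [NormedSpace ℝ E]
    [MeasurableSpace E] [BorelSpace E] [FiniteDimensional ℝ E] [Nontrivial E] (μ : Measure E)
    [μ.IsAddHaarMeasure] (x : E) (r : ℝ) :
    Tendsto (fun t => μ (closedBall x (r + t) \ ball x (r - t))) (𝓝[>] 0) (𝓝 0) := by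
  have hsphere : (⋂ t > (0 : ℝ), closedBall x (r + t) \ ball x (r - t)) = sphere x r := by
    ext y
    simp only [Set.mem_iInter, Set.mem_sdiff, mem_closedBall, mem_ball, not_lt, mem_sphere]
    refine ⟨fun h => le_antisymm ?_ ?_, fun h t ht => ⟨by linarith, by linarith⟩⟩
    · exact le_of_forall_pos_le_add fun t ht => (h t ht).1
    · exact le_of_forall_pos_le_add fun t ht => by linarith [(h t ht).2]
  have hmono : ∀ t t' : ℝ, 0 < t → t ≤ t' →
      closedBall x (r + t) \ ball x (r - t) ⊆ closedBall x (r + t') \ ball x (r - t') :=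
    fun t t' _ htt' => Set.sdiff_subset_sdiff (closedBall_subset_closedBall (by linarith))
      (ball_subset_ball (by linarith))
  have h := tendsto_measure_biInter_gt (μ := μ)
    (fun t _ => (measurableSet_closedBall.diff measurableSet_ball).nullMeasurableSet) hmono
    ⟨1, one_pos, ((measure_mono Set.sdiff_subset).trans_lt measure_closedBall_lt_top).ne⟩
  rwa [hsphere, Measure.addHaar_sphere] at h

end Shell

section Deviation

variable {d : ℕ} {δ a ℓ r : ℝ} {P : Set (EuclideanSpace ℝ (Fin d))}
  {S : Finset (EuclideanSpace ℝ (Fin d))} {x : EuclideanSpace ℝ (Fin d)}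

noncomputable def deviationBound (d : ℕ) (r δ : ℝ) : ℝ≥0∞ :=
  ENNReal.ofReal (2 * δ) * volume (closedBall (0 : EuclideanSpace ℝ (Fin d)) r)
    + 2 * volume (closedBall (0 : EuclideanSpace ℝ (Fin d)) (r + δ * √d) \ ball 0 (r - δ * √d))

lemma tendsto_deviationBound (hd : 1 ≤ d) (r : ℝ) :
    Tendsto (deviationBound d r) (𝓝[>] 0) (𝓝 0) := by
  have : Nonempty (Fin d) := ⟨⟨0, hd⟩⟩
  have hlin : Tendsto (fun δ : ℝ => ENNReal.ofReal (2 * δ)) (𝓝[>] 0) (𝓝 0) :=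
    ENNReal.ofReal_zero ▸ ENNReal.tendsto_ofReal
      (((by fun_prop : Continuous fun δ : ℝ => 2 * δ).tendsto' 0 0 (mul_zero 2)).mono_left
        nhdsWithin_le_nhds)
  have hscale : Tendsto (fun δ : ℝ => δ * √d) (𝓝[>] 0) (𝓝[>] 0) := by
    have hd' : (0 : ℝ) < √d := Real.sqrt_pos.mpr (by exact_mod_cast hd)
    exact tendsto_nhdsWithin_of_tendsto_nhds_of_eventually_within _
      (((by fun_prop : Continuous fun δ : ℝ => δ * √d).tendsto' 0 0 (zero_mul _)).mono_left
        nhdsWithin_le_nhds)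
      (eventually_nhdsWithin_of_forall fun δ (hδ : 0 < δ) => mul_pos hδ hd')
  have hann := (tendsto_addHaar_closedBall_sdiff_ball volume (0 : EuclideanSpace ℝ (Fin d))
    r).comp hscale
  unfold deviationBound
  simpa only [Function.comp_def, zero_mul, mul_zero, add_zero] using
    (ENNReal.Tendsto.mul_const hlin (Or.inr (measure_closedBall_lt_top (μ := volume)
      (x := (0 : EuclideanSpace ℝ (Fin d))) (r := r)).ne)).add
    (ENNReal.Tendsto.const_mul hann (Or.inr (ENNReal.ofNat_ne_top (n := 2))))

variable (hδ : 0 < δ) (hδ1 : δ ≤ 1) (hs1 : δ * √d ≤ 1) (ha : 0 < a)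
  (hP : ∀ K : Set (EuclideanSpace ℝ (Fin d)), Bornology.IsBounded K → (P ∩ K).Finite)
  (hreg : ∀ z : Fin d → ℤ, gridCube d δ z ⊆ ball (0 : EuclideanSpace ℝ (Fin d)) (ℓ + 1) →
    |((P ∩ gridCube d δ z).ncard : ℝ) / (a * δ ^ d) - 1| < δ)
  (hS : (S.card : ℝ) ≤ a * δ ^ (d + 1)) (hx : x ∈ ball (0 : EuclideanSpace ℝ (Fin d)) (ℓ - r))
include hδ hδ1 hs1 ha hP hreg hS hx

lemma ofReal_abs_ncard_div_sub_volume_le (z : Fin d → ℤ) :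
    ENNReal.ofReal |(((P ∩ gridCube d δ z ∩ closedBall x r) \ ↑S).ncard : ℝ) / a -
        (volume (gridCube d δ z ∩ closedBall x r)).toReal|
      ≤ ENNReal.ofReal (2 * δ) * volume (gridCube d δ z ∩ closedBall x r)
        + 2 * volume (gridCube d δ z ∩ (closedBall x (r + δ * √d) \ ball x (r - δ * √d))) := by
  set Q := gridCube d δ z
  have hdiam : ∀ p ∈ Q, ∀ q ∈ Q, dist p q ≤ δ * √d :=
    fun p hp q hq => dist_le_of_mem_gridCube hδ.le hp hq
  rcases (Q ∩ closedBall x r).eq_empty_or_nonempty with hmiss | hmeet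
  · simp [Set.inter_assoc, hmiss]
  have hQℓ : Q ⊆ ball 0 (ℓ + 1) := (subset_closedBall_add_of_inter_nonempty hdiam hmeet).trans
    (closedBall_subset_ball' (by linarith [mem_ball.mp hx]))
  have hfin : (P ∩ Q).Finite := hP Q (isBounded_ball.subset hQℓ)
  have hvol : volume Q = ENNReal.ofReal (δ ^ d) := volume_gridCube hδ.le z
  by_cases hin : Q ⊆ closedBall x r
  · have hQB : Q ∩ closedBall x r = Q := Set.inter_eq_left.mpr hin
    have hS' : (S.card : ℝ) ≤ δ * (a * δ ^ d) := hS.trans_eq (by ring)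
    rw [Set.inter_assoc, hQB, toReal_volume_gridCube hδ.le]
    calc _ ≤ ENNReal.ofReal (2 * δ * δ ^ d) := ENNReal.ofReal_le_ofReal
          (abs_ncard_sdiff_div_sub_le hfin ha (pow_pos hδ d) (hreg z hQℓ) hS')
      _ = ENNReal.ofReal (2 * δ) * volume Q := by
        rw [hvol, ← ENNReal.ofReal_mul (by positivity)]
      _ ≤ _ := le_self_add
  · have hann := subset_closedBall_sdiff_ball_of_inter_nonempty hdiam hmeet hin
    have hvolB : (volume (Q ∩ closedBall x r)).toReal ≤ δ ^ d := by
      rw [← toReal_volume_gridCube hδ.le z]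
      exact ENNReal.toReal_mono (hvol ▸ ENNReal.ofReal_ne_top) (measure_mono Set.inter_subset_left)
    have hcount : (((P ∩ Q ∩ closedBall x r) \ ↑S).ncard : ℝ) / a ≤ 2 * δ ^ d :=
      ncard_div_le_two_mul hfin (Set.sdiff_subset.trans Set.inter_subset_left) ha (pow_pos hδ d)
        hδ1 (hreg z hQℓ)
    calc _ ≤ ENNReal.ofReal (2 * δ ^ d) := ENNReal.ofReal_le_ofReal
          (abs_sub_le_of_nonneg_of_le (by positivity) hcount ENNReal.toReal_nonneg
            (by linarith [pow_pos hδ d]))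
      _ = 2 * volume (Q ∩ (closedBall x (r + δ * √d) \ ball x (r - δ * √d))) := by
        rw [Set.inter_eq_left.mpr hann, hvol, ENNReal.ofReal_mul zero_le_two, ENNReal.ofReal_ofNat]
      _ ≤ _ := le_add_self

lemma tsum_ofReal_abs_ncard_div_sub_volume_le :
    ∑' z : Fin d → ℤ, ENNReal.ofReal
        |(((P ∩ gridCube d δ z ∩ closedBall x r) \ ↑S).ncard : ℝ) / a -
          (volume (gridCube d δ z ∩ closedBall x r)).toReal|
      ≤ deviationBound d r δ := calc
  _ ≤ ∑' z, (ENNReal.ofReal (2 * δ) * volume (gridCube d δ z ∩ closedBall x r)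
        + 2 * volume (gridCube d δ z ∩ (closedBall x (r + δ * √d) \ ball x (r - δ * √d)))) :=
      ENNReal.tsum_le_tsum
        (ofReal_abs_ncard_div_sub_volume_le hδ hδ1 hs1 ha hP hreg hS hx)
  _ = ENNReal.ofReal (2 * δ) * ∑' z, volume (gridCube d δ z ∩ closedBall x r)
        + 2 * ∑' z, volume (gridCube d δ z ∩ (closedBall x (r + δ * √d) \ ball x (r - δ * √d))) := by
      rw [ENNReal.tsum_add, ENNReal.tsum_mul_left, ENNReal.tsum_mul_left]
  _ ≤ ENNReal.ofReal (2 * δ) * volume (closedBall x r)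
        + 2 * volume (closedBall x (r + δ * √d) \ ball x (r - δ * √d)) := by
      gcongr
      · exact tsum_volume_gridCube_inter_le hδ measurableSet_closedBall
      · exact tsum_volume_gridCube_inter_le hδ (measurableSet_closedBall.diff measurableSet_ball)
  _ = deviationBound d r δ := by
      rw [Measure.addHaar_closedBall_center, measure_closedBall_sdiff_ball_center, deviationBound]

end Deviation

theorem counts_close_to_volumes_general
    (d : ℕ) (hd : 1 ≤ d) (r : ℝ) (k : ℕ) (ε : ℝ) (hε : 0 < ε) :
    ∃ δ₁ : ℝ, 0 < δ₁ ∧ ∀ δ ∈ Set.Ioc (0 : ℝ) δ₁, ∀ ℓ : ℝ, r ≤ ℓ → ∀ a : ℝ, 0 < a →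
      (k : ℝ) ≤ a * δ ^ (d + 1) →
      ∀ P : Set (EuclideanSpace ℝ (Fin d)),
        (∀ K : Set (EuclideanSpace ℝ (Fin d)), Bornology.IsBounded K → (P ∩ K).Finite) →
        (∀ z : Fin d → ℤ, gridCube d δ z ⊆ ball (0 : EuclideanSpace ℝ (Fin d)) (ℓ + 1) →
          |((P ∩ gridCube d δ z).ncard : ℝ) / (a * δ ^ d) - 1| < δ) →
        ∀ S : Finset (EuclideanSpace ℝ (Fin d)),
          ↑S ⊆ P ∩ ball (0 : EuclideanSpace ℝ (Fin d)) (ℓ - r) → S.card ≤ k →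
          ∑ x ∈ S, ∑' z : Fin d → ℤ,
              ENNReal.ofReal
                |(((P ∩ gridCube d δ z ∩ closedBall x r) \ ↑S).ncard : ℝ) / a -
                  (volume (gridCube d δ z ∩ closedBall x r)).toReal|
            < ENNReal.ofReal ε := by
  have hsmall : ∀ᶠ δ in 𝓝[>] (0 : ℝ),
      k * deviationBound d r δ < ENNReal.ofReal ε ∧ δ ≤ 1 ∧ δ * √d ≤ 1 := by
    have hscale : Tendsto (fun δ : ℝ => δ * √d) (𝓝[>] 0) (𝓝 0) :=
      ((by fun_prop : Continuous fun δ : ℝ => δ * √d).tendsto' 0 0 (zero_mul _)).mono_left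
        nhdsWithin_le_nhds
    have hbound := (ENNReal.Tendsto.const_mul (tendsto_deviationBound hd r)
      (Or.inr (ENNReal.natCast_ne_top k))).eventually_lt_const
      (u := ENNReal.ofReal ε) (by simpa using hε)
    have hδ1 : ∀ᶠ δ in 𝓝[>] (0 : ℝ), δ ≤ 1 :=
      (eventually_le_nhds one_pos).filter_mono nhdsWithin_le_nhds
    exact hbound.and (hδ1.and (hscale.eventually_le_const one_pos))
  obtain ⟨δ₁, hδ₁, hδ₁small⟩ := mem_nhdsGT_iff_exists_Ioc_subset.mp hsmall
  refine ⟨δ₁, hδ₁, fun δ hδ ℓ _ a ha hk P hP hreg S hS hSk => ?_⟩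
  obtain ⟨hlt, hδ1, hs1⟩ := hδ₁small hδ
  have hSa : (S.card : ℝ) ≤ a * δ ^ (d + 1) := (Nat.cast_le.mpr hSk).trans hk
  calc _ ≤ ∑ _x ∈ S, deviationBound d r δ := Finset.sum_le_sum fun x hx =>
        tsum_ofReal_abs_ncard_div_sub_volume_le hδ.1 hδ1 hs1 ha hP hreg hSa (hS hx).2
    _ = S.card * deviationBound d r δ := by rw [Finset.sum_const, nsmul_eq_mul]
    _ ≤ k * deviationBound d r δ := by gcongr
    _ < ENNReal.ofReal ε := hlt

/-- Deterministic content of Lemma 4.3: on the regularity event, the normalized counts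
of points in cubes intersected with balls around points of `S` are uniformly close to
the corresponding Lebesgue volumes. -/
theorem counts_close_to_volumes
    (d : ℕ) (hd : 1 ≤ d) (r : ℝ) (hr : 0 < r) (k : ℕ) (ε : ℝ) (hε : 0 < ε) :
    ∃ δ₁ : ℝ, 0 < δ₁ ∧ ∀ δ ∈ Set.Ioc (0 : ℝ) δ₁, ∀ ℓ : ℝ, r ≤ ℓ → ∀ a : ℝ, 0 < a →
      (k : ℝ) ≤ a * δ ^ (d + 1) →
      ∀ P : Set (EuclideanSpace ℝ (Fin d)),
        (∀ K : Set (EuclideanSpace ℝ (Fin d)), Bornology.IsBounded K → (P ∩ K).Finite) →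
        (∀ z : Fin d → ℤ, gridCube d δ z ⊆ ball (0 : EuclideanSpace ℝ (Fin d)) (ℓ + 1) →
          |((P ∩ gridCube d δ z).ncard : ℝ) / (a * δ ^ d) - 1| < δ) →
        ∀ S : Finset (EuclideanSpace ℝ (Fin d)),
          ↑S ⊆ P ∩ ball (0 : EuclideanSpace ℝ (Fin d)) (ℓ - r) → S.card ≤ k →
          ∑ x ∈ S, ∑' z : Fin d → ℤ,
              ENNReal.ofReal
                |(((P ∩ gridCube d δ z ∩ closedBall x r) \ ↑S).ncard : ℝ) / a -
                  (volume (gridCube d δ z ∩ closedBall x r)).toReal|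
            < ENNReal.ofReal ε :=
  counts_close_to_volumes_general d hd r k ε hε
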